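/- Two-step reverse Hölder bound: for finite random variables X, Y with joint pmf p_{XY} and marginals p_X, p_Y, any function f : X × Y → ℝ with f > 0, and exponents α < 1, α' < 1 (α, α' ≠ 0) with conjugates 1/α + 1/β = 1 and 1/α' + 1/β' = 1: E_{p_{XY}}[f] ≥ (E_{p_Y}[ (E_{p_X}[f^β])^{β'/β} ])^{1/β'} · (E_{p_Y}[ (E_{p_X}[(p_{XY}/(p_X p_Y))^α])^{α'/α} ])^{1/α'}. -/

import Mathlib

/-!
For `0 < α < 1` the conjugate exponent `β` is negative, and the reverse Hölder inequality
`(∑ w a^α)^(1/α) (∑ w b^β)^(1/β) ≤ ∑ w a b` is ordinary Hölder with exponents `1/α` and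
`1/(1 - α)` applied to `(w a b)^α (w b^β)^(1-α) = w a^α`; the case `α < 0` follows by
exchanging the roles of `α` and `β`. Writing `p_{XY} = p_X p_Y r`, the expectation
`E_{p_{XY}}[f]` becomes `E_{p_Y}[E_{p_X}[r f]]`: reverse Hölder in `x` for every fixed `y`,
then reverse Hölder in `y` for the two resulting power means, gives the bound.
-/

open Real Finset

section PowerMean

variable {ι : Type*} [Fintype ι]

/-- Not normalised by `∑ i, w i`: a mean only for probability weights. -/
noncomputable def weightedPowerMean (w a : ι → ℝ) (p : ℝ) : ℝ :=
  (∑ i, w i * a i ^ p) ^ (1 / p)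

lemma weightedPowerMean_rpow {w a : ι → ℝ} (hw : ∀ i, 0 ≤ w i) (ha : ∀ i, 0 ≤ a i) (p q : ℝ) :
    weightedPowerMean w a p ^ q = (∑ i, w i * a i ^ p) ^ (q / p) := by
  have hsum : 0 ≤ ∑ i, w i * a i ^ p :=
    sum_nonneg fun i _ => mul_nonneg (hw i) (rpow_nonneg (ha i) p)
  rw [weightedPowerMean, ← rpow_mul hsum, one_div_mul_eq_div]

lemma weightedPowerMean_pos [Nonempty ι] {w a : ι → ℝ} (hw : ∀ i, 0 < w i) (ha : ∀ i, 0 < a i)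
    (p : ℝ) : 0 < weightedPowerMean w a p :=
  rpow_pos_of_pos (sum_pos (fun i _ => mul_pos (hw i) (rpow_pos_of_pos (ha i) p)) univ_nonempty) _

lemma sum_rpow_mul_rpow_one_sub_le {θ : ℝ} (hθ0 : 0 < θ) (hθ1 : θ < 1) {u v : ι → ℝ}
    (hu : ∀ i, 0 ≤ u i) (hv : ∀ i, 0 ≤ v i) :
    ∑ i, u i ^ θ * v i ^ (1 - θ) ≤ (∑ i, u i) ^ θ * (∑ i, v i) ^ (1 - θ) := by
  have hθ1' : 1 - θ ≠ 0 := sub_ne_zero.mpr hθ1.ne'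
  have hpq : (1 / θ).HolderConjugate (1 / (1 - θ)) :=
    holderConjugate_iff.mpr ⟨one_lt_one_div hθ0 hθ1, by simp only [one_div, inv_inv]; ring⟩
  have := inner_le_Lp_mul_Lq_of_nonneg univ hpq (f := fun i => u i ^ θ)
    (g := fun i => v i ^ (1 - θ)) (fun i _ => rpow_nonneg (hu i) _)
    (fun i _ => rpow_nonneg (hv i) _)
  simpa only [← rpow_mul (hu _), ← rpow_mul (hv _), mul_one_div_cancel hθ0.ne',
    mul_one_div_cancel hθ1', rpow_one, one_div_one_div] using this

lemma reverse_holder_of_pos {w a b : ι → ℝ} (hw : ∀ i, 0 ≤ w i) (ha : ∀ i, 0 < a i)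
    (hb : ∀ i, 0 < b i) {α β : ℝ} (hα0 : 0 < α) (hα1 : α < 1) (hαβ : 1 / α + 1 / β = 1) :
    weightedPowerMean w a α * weightedPowerMean w b β ≤ ∑ i, w i * a i * b i := by
  have hβ0 : β ≠ 0 := by
    rintro rfl
    rw [div_zero, add_zero, one_div, inv_eq_one] at hαβ
    exact hα1.ne hαβ
  have hβα : β * (1 - α) = -α := by field_simp at hαβ; linarith
  have hβinv : 1 / β = -((1 - α) * (1 / α)) := by field_simp at hαβ ⊢; linarith
  have hterm : ∀ i, (w i * a i * b i) ^ α * (w i * b i ^ β) ^ (1 - α) = w i * a i ^ α := by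
    intro i
    have hw' : w i ^ α * w i ^ (1 - α) = w i := by
      rw [← rpow_add' (hw i) (by simp), add_sub_cancel, rpow_one]
    have hb' : b i ^ α * b i ^ (β * (1 - α)) = 1 := by
      rw [hβα, ← rpow_add (hb i), add_neg_cancel, rpow_zero]
    rw [mul_rpow (mul_nonneg (hw i) (ha i).le) (hb i).le, mul_rpow (hw i) (ha i).le,
      mul_rpow (hw i) (rpow_nonneg (hb i).le _), ← rpow_mul (hb i).le]
    linear_combination (a i ^ α * w i ^ α * w i ^ (1 - α)) * hb' + a i ^ α * hw'
  have hU : ∑ i, w i * a i ^ α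
      ≤ (∑ i, w i * a i * b i) ^ α * (∑ i, w i * b i ^ β) ^ (1 - α) := by
    simp_rw [← hterm]
    exact sum_rpow_mul_rpow_one_sub_le hα0 hα1
      (fun i => mul_nonneg (mul_nonneg (hw i) (ha i).le) (hb i).le)
      (fun i => mul_nonneg (hw i) (rpow_nonneg (hb i).le _))
  have hS : 0 ≤ ∑ i, w i * a i * b i :=
    sum_nonneg fun i _ => mul_nonneg (mul_nonneg (hw i) (ha i).le) (hb i).le
  have hT : 0 ≤ ∑ i, w i * b i ^ β :=
    sum_nonneg fun i _ => mul_nonneg (hw i) (rpow_nonneg (hb i).le _)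
  unfold weightedPowerMean
  rcases hT.eq_or_lt with hT0 | hTpos
  · -- all weights vanish, and Lean's `0 ^ (1 / β)` is `0`
    rw [← hT0, zero_rpow (one_div_ne_zero hβ0), mul_zero]
    exact hS
  calc (∑ i, w i * a i ^ α) ^ (1 / α) * (∑ i, w i * b i ^ β) ^ (1 / β)
      ≤ ((∑ i, w i * a i * b i) ^ α * (∑ i, w i * b i ^ β) ^ (1 - α)) ^ (1 / α)
          * (∑ i, w i * b i ^ β) ^ (1 / β) := by
        gcongr
        exact sum_nonneg fun i _ => mul_nonneg (hw i) (rpow_nonneg (ha i).le _)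
    _ = ∑ i, w i * a i * b i := by
        rw [mul_rpow (rpow_nonneg hS _) (rpow_nonneg hT _), ← rpow_mul hS, ← rpow_mul hT,
          mul_one_div_cancel hα0.ne', rpow_one, mul_assoc, ← rpow_add hTpos, hβinv,
          add_neg_cancel, rpow_zero, mul_one]

lemma reverse_holder {w a b : ι → ℝ} (hw : ∀ i, 0 ≤ w i) (ha : ∀ i, 0 < a i)
    (hb : ∀ i, 0 < b i) {α β : ℝ} (hα1 : α < 1) (hα0 : α ≠ 0) (hαβ : 1 / α + 1 / β = 1) :
    weightedPowerMean w a α * weightedPowerMean w b β ≤ ∑ i, w i * a i * b i := by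
  rcases hα0.lt_or_gt with hαneg | hαpos
  · have hβ : 1 < 1 / β := by linarith [one_div_neg.mpr hαneg]
    have hβpos : 0 < β := one_div_pos.mp (one_pos.trans hβ)
    have hβ1 : β < 1 := (one_lt_div hβpos).mp hβ
    rw [mul_comm]
    simpa only [mul_right_comm] using
      reverse_holder_of_pos hw hb ha hβpos hβ1 (by linarith)
  · exact reverse_holder_of_pos hw ha hb hαpos hα1 hαβ

end PowerMean

theorem two_step_reverse_holder_of_weights {X Y : Type*} [Fintype X] [Nonempty X] [Fintype Y]
    {μ : Y → ℝ} {ν : X → ℝ} (hμ : ∀ y, 0 ≤ μ y) (hν : ∀ x, 0 < ν x) {g h : X × Y → ℝ}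
    (hg : ∀ z, 0 < g z) (hh : ∀ z, 0 < h z) {α β α' β' : ℝ}
    (hα : α < 1) (hα0 : α ≠ 0) (hα' : α' < 1) (hα'0 : α' ≠ 0)
    (hβ : 1 / α + 1 / β = 1) (hβ' : 1 / α' + 1 / β' = 1) :
    (∑ y, μ y * (∑ x, ν x * g (x, y) ^ α) ^ (α' / α)) ^ (1 / α')
        * (∑ y, μ y * (∑ x, ν x * h (x, y) ^ β) ^ (β' / β)) ^ (1 / β')
      ≤ ∑ y, μ y * ∑ x, ν x * (g (x, y) * h (x, y)) := by
  let A y := weightedPowerMean ν (fun x => g (x, y)) α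
  let B y := weightedPowerMean ν (fun x => h (x, y)) β
  have hA : ∀ y, 0 < A y := fun y => weightedPowerMean_pos hν (fun x => hg (x, y)) α
  have hB : ∀ y, 0 < B y := fun y => weightedPowerMean_pos hν (fun x => hh (x, y)) β
  have hA' : ∀ y, A y ^ α' = (∑ x, ν x * g (x, y) ^ α) ^ (α' / α) := fun y =>
    weightedPowerMean_rpow (fun x => (hν x).le) (fun x => (hg (x, y)).le) α α'
  have hB' : ∀ y, B y ^ β' = (∑ x, ν x * h (x, y) ^ β) ^ (β' / β) := fun y =>
    weightedPowerMean_rpow (fun x => (hν x).le) (fun x => (hh (x, y)).le) β β'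
  calc _ = weightedPowerMean μ A α' * weightedPowerMean μ B β' := by
        simp only [weightedPowerMean, hA', hB']
    _ ≤ ∑ y, μ y * A y * B y := reverse_holder hμ hA hB hα' hα'0 hβ'
    _ ≤ ∑ y, μ y * ∑ x, ν x * (g (x, y) * h (x, y)) := by
        refine sum_le_sum fun y _ => ?_
        rw [mul_assoc]
        refine mul_le_mul_of_nonneg_left ?_ (hμ y)
        simpa only [mul_assoc] using
          reverse_holder (fun x => (hν x).le) (fun x => hg (x, y)) (fun x => hh (x, y)) hα hα0 hβ

/-- Two-step reverse Hölder bound: for finite `X, Y` with strictly positive joint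
pmf `p`, any `f > 0` and exponents `α, α' < 1` (nonzero) with conjugates
`1/α + 1/β = 1 = 1/α' + 1/β'`:
`E_{p_{XY}}[f] ≥ (E_{p_Y}[(E_{p_X}[f^β])^{β'/β}])^{1/β'} ·
  (E_{p_Y}[(E_{p_X}[(p_{XY}/(p_X p_Y))^α])^{α'/α}])^{1/α'}`. -/
theorem two_step_reverse_holder
    {X Y : Type*} [Fintype X] [Fintype Y]
    (p : X × Y → ℝ) (hp : ∀ z, 0 < p z) (hp1 : ∑ z, p z = 1)
    (pX : X → ℝ) (hpX : ∀ x, pX x = ∑ y, p (x, y))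
    (pY : Y → ℝ) (hpY : ∀ y, pY y = ∑ x, p (x, y))
    (f : X × Y → ℝ) (hf : ∀ z, 0 < f z)
    (α β α' β' : ℝ)
    (hα : α < 1) (hα0 : α ≠ 0) (hα' : α' < 1) (hα'0 : α' ≠ 0)
    (hβ : 1 / α + 1 / β = 1) (hβ' : 1 / α' + 1 / β' = 1) :
    (∑ z, p z * f z)
      ≥ (∑ y, pY y * (∑ x, pX x * f (x, y) ^ β) ^ (β' / β)) ^ (1 / β')
        * (∑ y, pY y *
            (∑ x, pX x * (p (x, y) / (pX x * pY y)) ^ α) ^ (α' / α)) ^ (1 / α') := by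
  obtain ⟨x₀, y₀⟩ : Nonempty (X × Y) := by
    by_contra hempty
    simp [not_nonempty_iff.mp hempty] at hp1
  have : Nonempty X := ⟨x₀⟩
  have hpX0 : ∀ x, 0 < pX x := fun x => hpX x ▸ sum_pos (fun y _ => hp (x, y)) ⟨y₀, mem_univ _⟩
  have hpY0 : ∀ y, 0 < pY y := fun y => hpY y ▸ sum_pos (fun x _ => hp (x, y)) univ_nonempty
  have hdisintegrate : ∑ z, p z * f z
      = ∑ y, pY y * ∑ x, pX x * (p (x, y) / (pX x * pY y) * f (x, y)) := by
    rw [Fintype.sum_prod_type, sum_comm]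
    refine sum_congr rfl fun y _ => ?_
    rw [mul_sum]
    refine sum_congr rfl fun x _ => ?_
    field_simp [(hpX0 x).ne', (hpY0 y).ne']
  rw [ge_iff_le, hdisintegrate, mul_comm]
  exact two_step_reverse_holder_of_weights (fun y => (hpY0 y).le) hpX0
    (g := fun z => p z / (pX z.1 * pY z.2)) (fun z => div_pos (hp z) (mul_pos (hpX0 _) (hpY0 _)))
    hf hα hα0 hα' hα'0 hβ hβ'
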